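/- Assume Dickson's conjecture. Then for every k, N ∈ ℕ and every set A ⊆ [1, N] ∩ P_k there exists n ∈ ℕ such that [n+1, n+N] ∩ P_{k+1} = {n + a : a ∈ A}, i.e. for every m ∈ {1,…,N} one has Ω(n+m) = k+1 if and only if m ∈ A. -/

import Mathlib

/-!
Write `B = [1, N] \ A`. Give each `m ∈ B` its own prime `q_m > N` and use the Chinese remainder
theorem to get `c` with `N!² ∣ c` and `q_m^(k+2) ∣ c + m` for `m ∈ B`. With
`L = N!² · ∏_{m ∈ B} q_m^(k+2)`, every `n = c + L t` has `Ω(n + m) ≥ k + 2` for `m ∈ B`, and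
`n + m = m · ((c + m)/m + (L/m) t)` for `m ∈ A`. The linear forms `(c + m)/m + (L/m) t`, `m ∈ A`,
satisfy Dickson's condition: at `t = 0` they are `≡ 1` modulo primes `p ≤ N`, they avoid every
`q_m` because `|m - m'| < q_m`, and for the remaining primes `p > N ≥ |A|` there are fewer
forms than residues. So Dickson's conjecture makes them simultaneously prime for some `t`, and
then `Ω(n + m) = Ω(m) + 1 = k + 1` for `m ∈ A`.
-/

/-- `Omega n` is the number of prime factors of `n` counted with multiplicity. -/
def Omega (n : ℕ) : ℕ := n.primeFactorsList.length

/-- Dickson's conjecture: if the family of linear polynomials `aᵢ + bᵢ·x` (with `bᵢ ≥ 1`)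
satisfies Dickson's condition (for every prime `p` there is `y` with
`p ∤ ∏ᵢ (aᵢ + bᵢ·y)`), then there are infinitely many `m ∈ ℕ` such that all the values
`aᵢ + bᵢ·m` are prime. -/
def DicksonConjecture : Prop :=
  ∀ (k : ℕ) (a b : Fin k → ℤ), (∀ i, 1 ≤ b i) →
    (∀ p : ℕ, p.Prime → ∃ y : ℤ, ¬ ((p : ℤ) ∣ ∏ i, (a i + b i * y))) →
    ∀ N : ℕ, ∃ m : ℕ, N ≤ m ∧ ∀ i, Prime (a i + b i * (m : ℤ))

open Finset Nat

lemma Omega_mul {a b : ℕ} (ha : a ≠ 0) (hb : b ≠ 0) : Omega (a * b) = Omega a + Omega b :=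
  ArithmeticFunction.cardFactors_mul ha hb

lemma Omega_prime {p : ℕ} (hp : p.Prime) : Omega p = 1 :=
  ArithmeticFunction.cardFactors_apply_prime hp

lemma Omega_prime_pow {p j : ℕ} (hp : p.Prime) : Omega (p ^ j) = j :=
  ArithmeticFunction.cardFactors_apply_prime_pow hp

lemma Omega_le_of_dvd {d n : ℕ} (h : d ∣ n) (hn : n ≠ 0) : Omega d ≤ Omega n :=
  (primeFactorsList_sublist_of_dvd h hn).length_le

def DicksonCondition {ι : Type*} [Fintype ι] (a b : ι → ℕ) : Prop :=
  ∀ p, p.Prime → ∃ y : ℕ, ¬ p ∣ ∏ i, (a i + b i * y)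

theorem DicksonConjecture.exists_nat_forall_prime (hD : DicksonConjecture) {ι : Type*}
    [Fintype ι] {a b : ι → ℕ} (hb : ∀ i, 0 < b i) (hadm : DicksonCondition a b) (M : ℕ) :
    ∃ m, M ≤ m ∧ ∀ i, (a i + b i * m).Prime := by
  set e := Fintype.equivFin ι
  have hadm' : ∀ p : ℕ, p.Prime →
      ∃ y : ℤ, ¬ (p : ℤ) ∣ ∏ j, (a (e.symm j) + b (e.symm j) * y : ℤ) := by
    intro p hp
    obtain ⟨y, hy⟩ := hadm p hp
    refine ⟨y, ?_⟩
    rw [e.symm.prod_comp (fun i => (a i + b i * y : ℤ))]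
    exact_mod_cast hy
  obtain ⟨m, hMm, hm⟩ := hD _ (fun j => a (e.symm j)) (fun j => b (e.symm j))
    (fun j => by exact_mod_cast hb _) hadm' M
  exact ⟨m, hMm, fun i => by simpa [Nat.prime_iff_prime_int] using hm (e i)⟩

/-- Each form `a i + b i * y` vanishes at only one residue mod `p`, and there are `p` residues. -/
theorem exists_not_dvd_prod_of_card_lt {ι : Type*} [Fintype ι] {p : ℕ} (hp : p.Prime)
    (a b : ι → ℕ) (hb : ∀ i, ¬ p ∣ b i) (hcard : Fintype.card ι < p) :
    ∃ y : ℕ, ¬ p ∣ ∏ i, (a i + b i * y) := by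
  have := Fact.mk hp
  obtain ⟨z, -, hz⟩ := exists_mem_notMem_of_card_lt_card
    (s := univ.image fun i => -(a i : ZMod p) / b i) (t := univ)
    (card_image_le.trans_lt (by simpa [ZMod.card] using hcard))
  refine ⟨z.val, fun hdvd => ?_⟩
  rw [← ZMod.natCast_eq_zero_iff, Nat.cast_prod, prod_eq_zero_iff] at hdvd
  obtain ⟨i, -, hi⟩ := hdvd
  push_cast [ZMod.natCast_zmod_val] at hi
  have hbi : (b i : ZMod p) ≠ 0 := by rw [Ne, ZMod.natCast_eq_zero_iff]; exact hb i
  exact hz (mem_image.2 ⟨i, mem_univ _, (div_eq_iff hbi).2 (by linear_combination -hi)⟩)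

lemma exists_injective_primes_gt (N : ℕ) : ∃ q : ℕ → ℕ, q.Injective ∧ ∀ m, (q m).Prime ∧ N < q m :=
  have hmono := nth_strictMono infinite_setOfPred_prime
  ⟨fun m => nth Nat.Prime (N + 1 + m), hmono.injective.comp (add_right_injective _),
    fun _ => ⟨nth_mem_of_infinite infinite_setOfPred_prime _,
      lt_of_lt_of_le (by omega) hmono.le_apply⟩⟩

lemma exists_dvd_and_forall_dvd_add {B : Finset ℕ} {M : ℕ} {d : ℕ → ℕ}
    (hd : ∀ m ∈ B, d m ≠ 0) (hpair : Set.Pairwise B fun i j => Coprime (d i) (d j))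
    (hM : ∀ m ∈ B, M.Coprime (d m)) : ∃ c, M ∣ c ∧ ∀ m ∈ B, d m ∣ c + m := by
  obtain ⟨c₁, hc₁⟩ := chineseRemainderOfFinset (fun m => m * (d m - 1)) d B hd hpair
  obtain ⟨c, hc0, hcB⟩ := chineseRemainder (Coprime.prod_right hM) 0 c₁
  refine ⟨c, modEq_zero_iff_dvd.1 hc0, fun m hm => modEq_zero_iff_dvd.1 ?_⟩
  calc c + m ≡ m * (d m - 1) + m [MOD d m] :=
        ((hcB.of_dvd (dvd_prod_of_mem d hm)).trans (hc₁ m hm)).add_right m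
    _ = d m * m := by
      rw [← Nat.mul_succ, Nat.succ_eq_add_one, Nat.sub_add_cancel (one_le_iff_ne_zero.2 (hd m hm)),
        mul_comm]
    _ ≡ 0 [MOD d m] := modEq_zero_iff_dvd.2 (dvd_mul_right _ _)

lemma not_dvd_add_self_div {p c m : ℕ} (hp : p.Prime) (hm : 0 < m) (h : m * p ∣ c) :
    ¬ p ∣ (c + m) / m := by
  rw [Nat.add_div_right c hm, ← Nat.dvd_add_iff_right (dvd_div_of_mul_dvd h)]
  exact hp.not_dvd_one

lemma eq_of_dvd_add_of_dvd_add {p c m m' : ℕ} (h : p ∣ c + m) (h' : p ∣ c + m')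
    (hm : m < p) (hm' : m' < p) : m = m' :=
  (ModEq.add_left_cancel' c ((modEq_zero_iff_dvd.2 h).trans (modEq_zero_iff_dvd.2 h').symm)
    ).eq_of_lt_of_lt hm hm'

theorem dicksonCondition_add_div {N c L : ℕ} {A : Finset ℕ} (hA : A ⊆ Icc 1 N)
    (hc : N ! ^ 2 ∣ c) (hL : N ! ∣ L)
    (hLp : ∀ p, p.Prime → N < p → p ∣ L → ∃ m' ∈ Icc 1 N \ A, p ∣ c + m') :
    DicksonCondition (fun m : A => (c + m) / m) (fun m : A => L / m) := by
  intro p hp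
  have hdvd_fac : ∀ m ∈ A, m ∣ N ! := fun m hm =>
    have hm := mem_Icc.1 (hA hm); dvd_factorial hm.1 hm.2
  by_cases hpL : p ∣ L
  · refine ⟨0, ?_⟩
    simp only [mul_zero, add_zero, hp.prime.dvd_finsetProd_iff, not_exists, not_and]
    rintro ⟨m, hmA⟩ - hdvd
    dsimp only at hdvd
    have hm := mem_Icc.1 (hA hmA)
    rcases le_or_gt p N with hpN | hpN
    · refine not_dvd_add_self_div hp hm.1 ?_ hdvd
      refine Dvd.dvd.trans ?_ hc
      rw [sq]
      exact mul_dvd_mul (hdvd_fac m hmA) (dvd_factorial hp.pos hpN)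
    · obtain ⟨m', hm', hpm'⟩ := hLp p hp hpN hpL
      obtain ⟨hm'N, hm'A⟩ := mem_sdiff.1 hm'
      have hm'le := (mem_Icc.1 hm'N).2
      have hmc : m ∣ c + m :=
        dvd_add ((hdvd_fac m hmA).trans ((dvd_pow_self _ two_ne_zero).trans hc)) dvd_rfl
      have hpm := hdvd.trans (div_dvd_of_dvd hmc)
      exact hm'A (eq_of_dvd_add_of_dvd_add hpm hpm' (by omega) (by omega) ▸ hmA)
  · have hpN : N < p := lt_of_not_ge fun h => hpL ((dvd_factorial hp.pos h).trans hL)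
    refine exists_not_dvd_prod_of_card_lt hp _ _ (fun m h => hpL ?_) ?_
    · exact h.trans (div_dvd_of_dvd ((hdvd_fac m m.2).trans hL))
    · have := card_le_card hA
      simp only [Fintype.card_coe, Nat.card_Icc] at this ⊢
      omega

lemma exists_dvd_add_of_prime_dvd {N K c p : ℕ} {B : Finset ℕ} {q : ℕ → ℕ}
    (hq : ∀ m, (q m).Prime) (hK : K ≠ 0) (hcB : ∀ m ∈ B, q m ^ K ∣ c + m) (hp : p.Prime)
    (hpN : N < p) (hpL : p ∣ N ! ^ 2 * ∏ m ∈ B, q m ^ K) : ∃ m ∈ B, p ∣ c + m := by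
  rcases hp.dvd_mul.1 hpL with h | h
  · exact absurd (hp.dvd_factorial.1 (hp.dvd_of_dvd_pow h)) hpN.not_ge
  · obtain ⟨m, hm, hpm⟩ := (hp.prime.dvd_finsetProd_iff _).1 h
    have hpq := (prime_dvd_prime_iff_eq hp (hq m)).1 (hp.dvd_of_dvd_pow hpm)
    exact ⟨m, hm, hpq ▸ (dvd_pow_self _ hK).trans (hcB m hm)⟩

theorem exists_pattern (hD : DicksonConjecture) (N K : ℕ) (hK : K ≠ 0) (A : Finset ℕ)
    (hA : A ⊆ Icc 1 N) : ∃ n, 1 ≤ n ∧ (∀ m ∈ A, ∃ p, p.Prime ∧ n + m = m * p) ∧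
      ∀ m ∈ Icc 1 N \ A, ∃ q, q.Prime ∧ q ^ K ∣ n + m := by
  obtain ⟨q, hq_inj, hq⟩ := exists_injective_primes_gt N
  set B := Icc 1 N \ A
  obtain ⟨c, hc, hcB⟩ := exists_dvd_and_forall_dvd_add (B := B) (M := N ! ^ 2)
    (d := fun m => q m ^ K) (fun m _ => pow_ne_zero _ (hq m).1.ne_zero)
    (fun m _ m' _ hne => coprime_pow_primes K K (hq m).1 (hq m').1 (hq_inj.ne hne))
    (fun m _ => Coprime.pow 2 K ((hq m).1.coprime_iff_not_dvd.2 fun h =>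
      (hq m).2.not_ge ((hq m).1.dvd_factorial.1 h)).symm)
  set L := N ! ^ 2 * ∏ m ∈ B, q m ^ K
  have hL0 : 0 < L := Nat.pos_of_ne_zero <| mul_ne_zero (by positivity) <|
    prod_ne_zero_iff.2 fun m _ => pow_ne_zero _ (hq m).1.ne_zero
  have hdvdF : ∀ m ∈ A, m ∣ N ! ^ 2 := fun m hm =>
    (dvd_factorial (mem_Icc.1 (hA hm)).1 (mem_Icc.1 (hA hm)).2).trans (dvd_pow_self _ two_ne_zero)
  have hdvdL : ∀ m ∈ A, m ∣ L := fun m hm => (hdvdF m hm).trans (dvd_mul_right _ _)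
  obtain ⟨t, ht, htp⟩ := hD.exists_nat_forall_prime (ι := A)
    (fun m => Nat.div_pos (le_of_dvd hL0 (hdvdL m m.2)) (mem_Icc.1 (hA m.2)).1)
    (dicksonCondition_add_div hA hc ((dvd_pow_self _ two_ne_zero).trans (dvd_mul_right _ _))
      fun p hp hpN hpL => exists_dvd_add_of_prime_dvd (fun m => (hq m).1) hK hcB hp hpN hpL) 1
  refine ⟨c + L * t, (Nat.mul_pos hL0 ht).trans_le (Nat.le_add_left _ _),
    fun m hm => ⟨_, htp ⟨m, hm⟩, ?_⟩, fun m hm => ⟨q m, (hq m).1, ?_⟩⟩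
  · show c + L * t + m = m * ((c + m) / m + L / m * t)
    have hmc : m ∣ c + m := dvd_add ((hdvdF m hm).trans hc) dvd_rfl
    rw [Nat.mul_add, Nat.mul_div_cancel' hmc, ← mul_assoc, Nat.mul_div_cancel' (hdvdL m hm)]
    ring
  · rw [add_right_comm]
    exact dvd_add (hcB m hm) (dvd_mul_of_dvd_left (dvd_mul_of_dvd_right (dvd_prod_of_mem _ hm) _) _)

theorem pattern_transfer_Pk_to_Pk_succ_general (hDickson : DicksonConjecture)
    (k N : ℕ)
    (A : Set ℕ) (hA : A ⊆ {m : ℕ | 1 ≤ m ∧ m ≤ N ∧ Omega m = k}) :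
    ∃ n : ℕ, 1 ≤ n ∧ ∀ m : ℕ, 1 ≤ m → m ≤ N → (Omega (n + m) = k + 1 ↔ m ∈ A) := by
  classical
  obtain ⟨n, hn, hA_prime, hB_pow⟩ :=
    exists_pattern hDickson N (k + 2) (by omega) ((Icc 1 N).filter (· ∈ A)) (filter_subset _ _)
  refine ⟨n, hn, fun m hm1 hmN => ?_⟩
  by_cases hmA : m ∈ A
  · obtain ⟨p, hp, hnm⟩ := hA_prime m (by simp [hm1, hmN, hmA])
    rw [hnm, Omega_mul (by omega) hp.ne_zero, Omega_prime hp, (hA hmA).2.2]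
    simp [hmA]
  · obtain ⟨q, hq, hqn⟩ := hB_pow m (by simp [hm1, hmN, hmA])
    have := Omega_le_of_dvd hqn (by omega)
    rw [Omega_prime_pow hq] at this
    simp only [hmA, iff_false]
    omega

/-- Assuming Dickson's conjecture: for all `k, N ≥ 1` and every set
`A ⊆ [1, N] ∩ P_k`, there is `n` such that `[n+1, n+N] ∩ P_{k+1} = {n + a : a ∈ A}`. -/
theorem pattern_transfer_Pk_to_Pk_succ (hDickson : DicksonConjecture)
    (k N : ℕ) (hk : 1 ≤ k) (hN : 1 ≤ N)
    (A : Set ℕ) (hA : A ⊆ {m : ℕ | 1 ≤ m ∧ m ≤ N ∧ Omega m = k}) :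
    ∃ n : ℕ, 1 ≤ n ∧ ∀ m : ℕ, 1 ≤ m → m ≤ N → (Omega (n + m) = k + 1 ↔ m ∈ A) :=
  pattern_transfer_Pk_to_Pk_succ_general hDickson k N A hA
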